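/- Let c ≥ 7 and let J ⊆ S = ℚ[x_i : i ∈ ℤ/cℤ] be generated by the quadrics x_i x_j (cyclic distance ≥ 3) and x_i² − x_{i−1}x_{i−3}. Then for every i ∈ ℤ/cℤ: (a) x_i² x_{i+1} x_{i+2} ∈ J; (b) x_i x_{i+1}² x_{i+2} ∈ J; and (c) x_i x_{i+1} x_{i+2}² − x_{i−1} x_i x_{i+1}² ∈ J, so all the degree-4 monomials x_i x_{i+1} x_{i+2}² are congruent to one another modulo J. -/
import Mathlib


open MvPolynomial

/-- The ideal `J` of `ℚ[x_i : i ∈ ℤ/cℤ]` generated by the monomials `x_i x_j` for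
pairs of cyclic distance `≥ 3` together with the binomials `x_i² − x_{i−1} x_{i−3}`. -/
noncomputable def cyclicQuadricIdeal (c : ℕ) [NeZero c] : Ideal (MvPolynomial (ZMod c) ℚ) :=
  Ideal.span
    ({p | ∃ i j : ZMod c, 3 ≤ (i - j).val ∧ 3 ≤ (j - i).val ∧ p = X i * X j} ∪
     {p | ∃ i : ZMod c, p = X i ^ 2 - X (i - 1) * X (i - 3)})

/-- For `c ≥ 7` and every `i ∈ ℤ/cℤ`: (a) `x_i² x_{i+1} x_{i+2} ∈ J`;
(b) `x_i x_{i+1}² x_{i+2} ∈ J`; (c) `x_i x_{i+1} x_{i+2}² − x_{i−1} x_i x_{i+1}² ∈ J`,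
so all the degree-4 monomials `x_i x_{i+1} x_{i+2}²` agree modulo `J`. -/
theorem degree_four_congruences (c : ℕ) (hc : 7 ≤ c) [NeZero c] (i : ZMod c) :
    X i ^ 2 * X (i + 1) * X (i + 2) ∈ cyclicQuadricIdeal c ∧
    X i * X (i + 1) ^ 2 * X (i + 2) ∈ cyclicQuadricIdeal c ∧
    X i * X (i + 1) * X (i + 2) ^ 2 - X (i - 1) * X i * X (i + 1) ^ 2 ∈
      cyclicQuadricIdeal c := by
  have hb : ∀ k : ZMod c, X k ^ 2 - X (k - 1) * X (k - 3) ∈ cyclicQuadricIdeal c := fun k =>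
    Ideal.subset_span (Or.inr ⟨k, rfl⟩)
  have h4 : ((4 : ZMod c)).val = 4 := by
    have h : (4 : ℕ) < c := by omega
    simpa using ZMod.val_cast_of_lt h
  have h4ne : (4 : ZMod c) ≠ 0 := by
    intro h
    rw [h, ZMod.val_zero] at h4
    omega
  have hm : ∀ j k : ZMod c, j - k = 4 → X j * X k ∈ cyclicQuadricIdeal c := by
    intro j k h
    refine Ideal.subset_span (Or.inl ⟨j, k, ?_, ?_, rfl⟩)
    · rw [h, h4]; omega
    · have : k - j = -4 := by rw [← h]; ring
      rw [this, ZMod.neg_val, if_neg h4ne, h4]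
      omega
  refine ⟨?_, ?_, ?_⟩
  · have e : X (σ := ZMod c) (R := ℚ) i ^ 2 * X (i + 1) * X (i + 2)
        = (X i ^ 2 - X (i - 1) * X (i - 3)) * (X (i + 1) * X (i + 2))
          + (X (i - 1) * X (i + 2)) * (X (i + 1) * X (i - 3)) := by ring
    rw [e]
    exact Ideal.add_mem _ (Ideal.mul_mem_right _ _ (hb i))
      (Ideal.mul_mem_left _ _ (hm (i + 1) (i - 3) (by ring)))
  · have hbi := hb (i + 1)
    rw [show i + 1 - 1 = i by ring, show i + 1 - 3 = i - 2 by ring] at hbi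
    have e : X (σ := ZMod c) (R := ℚ) i * X (i + 1) ^ 2 * X (i + 2)
        = (X (i + 1) ^ 2 - X i * X (i - 2)) * (X i * X (i + 2))
          + (X i ^ 2) * (X (i + 2) * X (i - 2)) := by ring
    rw [e]
    exact Ideal.add_mem _ (Ideal.mul_mem_right _ _ hbi)
      (Ideal.mul_mem_left _ _ (hm (i + 2) (i - 2) (by ring)))
  · have hbi := hb (i + 2)
    rw [show i + 2 - 1 = i + 1 by ring, show i + 2 - 3 = i - 1 by ring] at hbi
    have e : X (σ := ZMod c) (R := ℚ) i * X (i + 1) * X (i + 2) ^ 2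
          - X (i - 1) * X i * X (i + 1) ^ 2
        = (X i * X (i + 1)) * (X (i + 2) ^ 2 - X (i + 1) * X (i - 1)) := by ring
    rw [e]
    exact Ideal.mul_mem_left _ _ hbi
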